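/- The left coset space Sp(2)/T, where Sp(2) is the group of 2×2 quaternionic matrices Q with Q⁻¹ = Q* (quaternionic conjugate transpose) and T ≤ Sp(2) is the subgroup of diagonal matrices diag(a,b) with a, b unit quaternions, equipped with the quotient topology, is homeomorphic to the 4-sphere S⁴. -/

import Mathlib

open Quaternion Matrix

abbrev Sp2 : Type := unitary (Matrix (Fin 2) (Fin 2) ℍ[ℝ])

noncomputable def quatDiagTorus : Subgroup Sp2 where
  carrier := {Q | ∃ a b : ℍ[ℝ], ‖a‖ = 1 ∧ ‖b‖ = 1 ∧ Q.val = !![a, 0; 0, b]}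
  one_mem' := ⟨1, 1, by simp, by simp, by simp [Matrix.one_fin_two]⟩
  mul_mem' := by
    rintro P Q ⟨a, b, ha, hb, hP⟩ ⟨a', b', ha', hb', hQ⟩
    refine ⟨a * a', b * b', by simp [ha, ha'], by simp [hb, hb'], ?_⟩
    show P.val * Q.val = _
    rw [hP, hQ]; simp [Matrix.mul_fin_two]
  inv_mem' := by
    rintro Q ⟨a, b, ha, hb, hQ⟩
    refine ⟨star a, star b, by simp [ha], by simp [hb], ?_⟩
    show star Q.val = _
    rw [hQ]
    refine Matrix.ext fun i j => ?_
    fin_cases i <;> fin_cases j <;> simp [Matrix.star_apply]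

namespace Sp2Proof

local notation "M2" => Matrix (Fin 2) (Fin 2) ℍ[ℝ]

lemma norm_one_of_normSq {a : ℍ[ℝ]} (h : normSq a = 1) : ‖a‖ = 1 := by
  have h2 := normSq_eq_norm_mul_self a
  nlinarith [norm_nonneg a]

lemma normSq_one_of_norm {a : ℍ[ℝ]} (h : ‖a‖ = 1) : normSq a = 1 := by
  rw [normSq_eq_norm_mul_self, h]; ring

/-- Column sums: for a unitary matrix the columns are unit vectors. -/
lemma col_sum {Q : M2} (hQ : star Q * Q = 1) (j : Fin 2) :
    normSq (Q 0 j) + normSq (Q 1 j) = 1 := by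
  have h : (star Q * Q) j j = (1 : M2) j j := by rw [hQ]
  rw [Matrix.mul_apply, Fin.sum_univ_two] at h
  simp only [Matrix.star_apply, Matrix.one_apply_eq, star_mul_self] at h
  have h' : ((normSq (Q 0 j) + normSq (Q 1 j) : ℝ) : ℍ[ℝ]) = ((1 : ℝ) : ℍ[ℝ]) := by
    push_cast
    simpa using h
  exact coe_injective h' 

lemma col_orth {Q : M2} (hQ : star Q * Q = 1) :
    star (Q 0 0) * Q 0 1 + star (Q 1 0) * Q 1 1 = 0 := by
  have h : (star Q * Q) 0 1 = (1 : M2) 0 1 := by rw [hQ]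
  rw [Matrix.mul_apply, Fin.sum_univ_two] at h
  simpa [Matrix.star_apply, Matrix.one_apply] using h

/-- A unitary 2×2 matrix with vanishing (1,0) entry lies in the diagonal torus. -/
lemma mem_torus_of {U : Sp2} (h10 : U.val 1 0 = 0) : U ∈ quatDiagTorus := by
  have h1 : star U.val * U.val = 1 := (Unitary.mem_iff.mp U.2).1
  have c0 := col_sum h1 0
  have c1 := col_sum h1 1
  rw [h10] at c0
  simp only [normSq.map_zero, add_zero] at c0
  have hU00 : U.val 0 0 ≠ 0 := by
    intro h; rw [h] at c0; simp at c0
  have orth := col_orth h1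
  rw [h10] at orth
  simp only [star_zero, zero_mul, add_zero] at orth
  have h01 : U.val 0 1 = 0 := by
    rcases mul_eq_zero.mp orth with h | h
    · exact absurd h (by simpa using hU00)
    · exact h
  rw [h01] at c1
  simp only [normSq.map_zero, zero_add] at c1
  refine ⟨U.val 0 0, U.val 1 1, norm_one_of_normSq c0, norm_one_of_normSq c1, ?_⟩
  refine Matrix.ext fun i j => ?_
  fin_cases i <;> fin_cases j <;> simp [h10, h01]

/-- The vector in `ℝ⁵` built from a quaternion and a real number. -/
noncomputable def fvec (q : ℍ[ℝ]) (t : ℝ) : EuclideanSpace ℝ (Fin 5) :=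
  (WithLp.equiv 2 (Fin 5 → ℝ)).symm ![q.re, q.imI, q.imJ, q.imK, t]

lemma norm_fvec (q : ℍ[ℝ]) (t : ℝ) : ‖fvec q t‖ = Real.sqrt (normSq q + t ^ 2) := by
  rw [EuclideanSpace.norm_eq]
  congr 1
  rw [Fin.sum_univ_five]
  simp only [fvec, WithLp.equiv_symm_apply, Real.norm_eq_abs, sq_abs, normSq_def']
  simp [Matrix.cons_val_zero, Matrix.cons_val_one]

lemma fvec_inj {q q' : ℍ[ℝ]} {t t' : ℝ} (h : fvec q t = fvec q' t') : q = q' ∧ t = t' := by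
  have h0 := congrFun (congrArg WithLp.ofLp h) 0
  have h1 := congrFun (congrArg WithLp.ofLp h) 1
  have h2 := congrFun (congrArg WithLp.ofLp h) 2
  have h3 := congrFun (congrArg WithLp.ofLp h) 3
  have h4 := congrFun (congrArg WithLp.ofLp h) 4
  simp only [fvec, WithLp.equiv_symm_apply] at h0 h1 h2 h3 h4
  simp at h0 h1 h2 h3 h4
  exact ⟨QuaternionAlgebra.ext h0 h1 h2 h3, h4⟩

/-- The map `Sp(2) → ℝ⁵` inducing the homeomorphism. -/
noncomputable def fQ (Q : Sp2) : EuclideanSpace ℝ (Fin 5) :=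
  fvec (2 * Q.val 0 0 * star (Q.val 1 0)) (normSq (Q.val 0 0) - normSq (Q.val 1 0))

lemma norm_fQ (Q : Sp2) : ‖fQ Q‖ = 1 := by
  have h1 : star Q.val * Q.val = 1 := (Unitary.mem_iff.mp Q.2).1
  have hc := col_sum h1 0
  rw [fQ, norm_fvec]
  have h2 : normSq (2 * Q.val 0 0 * star (Q.val 1 0))
      = 4 * (normSq (Q.val 0 0) * normSq (Q.val 1 0)) := by
    have h3 : (2 : ℍ[ℝ]) = ((2 : ℝ) : ℍ[ℝ]) := by norm_cast
    rw [normSq.map_mul, normSq.map_mul, h3, normSq_coe, normSq_star]; ring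
  rw [h2]
  have : 4 * (normSq (Q.val 0 0) * normSq (Q.val 1 0))
      + (normSq (Q.val 0 0) - normSq (Q.val 1 0)) ^ 2 = 1 := by nlinarith [hc]
  rw [this, Real.sqrt_one]

lemma cont_fQ : Continuous fQ := by
  have hv : Continuous fun Q : Sp2 => Q.val := continuous_subtype_val
  have hx : Continuous fun Q : Sp2 => Q.val 0 0 := hv.matrix_elem 0 0
  have hy : Continuous fun Q : Sp2 => Q.val 1 0 := hv.matrix_elem 1 0
  have hq : Continuous fun Q : Sp2 => 2 * Q.val 0 0 * star (Q.val 1 0) :=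
    (continuous_const.mul hx).mul hy.star
  have hns : Continuous (normSq : ℍ[ℝ] → ℝ) := continuous_normSq
  have ht : Continuous fun Q : Sp2 => normSq (Q.val 0 0) - normSq (Q.val 1 0) :=
    (hns.comp hx).sub (hns.comp hy)
  have : Continuous fun p : ℍ[ℝ] × ℝ => fvec p.1 p.2 := by
    apply Continuous.comp (PiLp.continuous_toLp 2 (fun _ : Fin 5 => ℝ))
    refine continuous_pi fun i => ?_
    fin_cases i
    · exact Quaternion.continuous_re.comp continuous_fst
    · exact Quaternion.continuous_imI.comp continuous_fst
    · exact Quaternion.continuous_imJ.comp continuous_fst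
    · exact Quaternion.continuous_imK.comp continuous_fst
    · exact continuous_snd
  exact this.comp (hq.prodMk ht)

lemma fQ_mul_torus (Q t : Sp2) (ht : t ∈ quatDiagTorus) : fQ (Q * t) = fQ Q := by
  obtain ⟨a, b, ha, hb, hval⟩ := ht
  have hna : normSq a = 1 := normSq_one_of_norm ha
  have hx : (Q * t).val 0 0 = Q.val 0 0 * a := by
    show (Q.val * t.val) 0 0 = _
    rw [hval, Matrix.mul_apply, Fin.sum_univ_two]; simp
  have hy : (Q * t).val 1 0 = Q.val 1 0 * a := by
    show (Q.val * t.val) 1 0 = _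
    rw [hval, Matrix.mul_apply, Fin.sum_univ_two]; simp
  have haa : a * star a = 1 := by
    rw [self_mul_star, hna]; exact coe_one
  have e1 : 2 * (Q.val 0 0 * a) * star (Q.val 1 0 * a)
      = 2 * Q.val 0 0 * star (Q.val 1 0) := by
    rw [StarMul.star_mul]
    calc 2 * (Q.val 0 0 * a) * (star a * star (Q.val 1 0))
        = 2 * Q.val 0 0 * ((a * star a) * star (Q.val 1 0)) := by
          rw [mul_assoc 2, mul_assoc, ← mul_assoc a, ← mul_assoc, ← mul_assoc]
      _ = 2 * Q.val 0 0 * star (Q.val 1 0) := by rw [haa, one_mul]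
  have e2 : normSq (Q.val 0 0 * a) - normSq (Q.val 1 0 * a)
      = normSq (Q.val 0 0) - normSq (Q.val 1 0) := by
    rw [normSq.map_mul, normSq.map_mul, hna, mul_one, mul_one]
  rw [fQ, fQ, hx, hy, e1, e2]

/-- The explicit section matrix for surjectivity. -/
noncomputable def mk2 (x : ℍ[ℝ]) (y : ℝ) : M2 := !![x, -(y : ℍ[ℝ]); (y : ℍ[ℝ]), star x]

lemma mk2_mem {x : ℍ[ℝ]} {y : ℝ} (h : normSq x + y ^ 2 = 1) : mk2 x y ∈ unitary M2 := by
  have hyy : (y : ℍ[ℝ]) * (y : ℍ[ℝ]) = ((y ^ 2 : ℝ) : ℍ[ℝ]) := by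
    rw [← coe_mul, sq]
  have hstar : star (mk2 x y) = !![star x, (y : ℍ[ℝ]); -(y : ℍ[ℝ]), x] := by
    refine Matrix.ext fun i j => ?_
    fin_cases i <;> fin_cases j <;> simp [mk2, Matrix.star_apply]
  have e1 : star x * x + (y : ℍ[ℝ]) * (y : ℍ[ℝ]) = 1 := by
    rw [star_mul_self, hyy, ← coe_add, h, coe_one]
  have e2 : star x * -(y : ℍ[ℝ]) + (y : ℍ[ℝ]) * star x = 0 := by
    rw [mul_neg, coe_commutes]; exact neg_add_cancel _
  have e3 : -(y : ℍ[ℝ]) * x + x * (y : ℍ[ℝ]) = 0 := by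
    rw [← coe_commutes, neg_mul]; exact neg_add_cancel _
  have e4 : -(y : ℍ[ℝ]) * -(y : ℍ[ℝ]) + x * star x = 1 := by
    rw [neg_mul_neg, self_mul_star, hyy, ← coe_add, add_comm, h, coe_one]
  have f1 : x * star x + -(y : ℍ[ℝ]) * -(y : ℍ[ℝ]) = 1 := by
    rw [add_comm]; exact e4
  have f2 : x * (y : ℍ[ℝ]) + -(y : ℍ[ℝ]) * x = 0 := by
    rw [add_comm]; exact e3
  have f3 : (y : ℍ[ℝ]) * star x + star x * -(y : ℍ[ℝ]) = 0 := by
    rw [add_comm]; exact e2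
  have f4 : (y : ℍ[ℝ]) * (y : ℍ[ℝ]) + star x * x = 1 := by
    rw [add_comm]; exact e1
  constructor
  · rw [hstar, mk2, Matrix.mul_fin_two, Matrix.one_fin_two, e1, e2, e3, e4]
  · rw [hstar, mk2, Matrix.mul_fin_two, Matrix.one_fin_two, f1, f2, f3, f4]

/-- Surjectivity of `fQ` onto the unit sphere. -/
lemma fQ_surj (v : EuclideanSpace ℝ (Fin 5)) (hv : ‖v‖ = 1) : ∃ Q : Sp2, fQ Q = v := by
  set p : ℍ[ℝ] := ⟨v 0, v 1, v 2, v 3⟩ with hp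
  set t : ℝ := v 4 with htdef
  have hn : normSq p + t ^ 2 = 1 := by
    have h1 : Real.sqrt (∑ i : Fin 5, ‖v i‖ ^ 2) = 1 := by
      rw [← EuclideanSpace.norm_eq]; exact hv
    have h2 : (∑ i : Fin 5, ‖v i‖ ^ 2) = 1 := by
      have hnn : (0:ℝ) ≤ ∑ i : Fin 5, ‖v i‖ ^ 2 :=
        Finset.sum_nonneg fun i _ => sq_nonneg _
      nlinarith [Real.sq_sqrt hnn]
    rw [Fin.sum_univ_five] at h2
    simp only [Real.norm_eq_abs, sq_abs] at h2
    rw [normSq_def']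
    exact h2
  have hfveq : fvec p t = v := by
    ext i
    fin_cases i <;> rfl
  by_cases ht1 : t = 1
  · have hp0 : p = 0 := by
      have : normSq p = 0 := by rw [ht1] at hn; nlinarith
      exact normSq_eq_zero.mp this
    refine ⟨1, ?_⟩
    have h00 : (1 : Sp2).val 0 0 = 1 := rfl
    have h10 : (1 : Sp2).val 1 0 = 0 := rfl
    rw [fQ, h00, h10]
    rw [← hfveq, hp0, ht1]
    simp
  · have htle : t ≤ 1 := by nlinarith [normSq_nonneg (a := p)]
    have hyp : (0:ℝ) < (1 - t) / 2 := by
      have hlt : t < 1 := lt_of_le_of_ne htle ht1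
      linarith
    set y : ℝ := Real.sqrt ((1 - t) / 2) with hydef
    have hy0 : 0 < y := Real.sqrt_pos.mpr hyp
    have hy2 : y ^ 2 = (1 - t) / 2 := Real.sq_sqrt hyp.le
    set x : ℍ[ℝ] := p * ((2 * y)⁻¹ : ℝ) with hxdef
    have hnx : normSq x = (1 + t) / 2 := by
      rw [hxdef, normSq.map_mul, normSq_coe]
      have : normSq p = (1 - t) * (1 + t) := by nlinarith
      rw [this]
      field_simp
      nlinarith [hy2]
    have hsum : normSq x + y ^ 2 = 1 := by rw [hnx, hy2]; ring
    refine ⟨⟨mk2 x y, mk2_mem hsum⟩, ?_⟩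
    have h00 : (⟨mk2 x y, mk2_mem hsum⟩ : Sp2).val 0 0 = x := rfl
    have h10 : (⟨mk2 x y, mk2_mem hsum⟩ : Sp2).val 1 0 = (y : ℍ[ℝ]) := rfl
    rw [fQ, h00, h10, star_coe]
    have hq : 2 * x * (y : ℍ[ℝ]) = p := by
      rw [hxdef]
      rw [show (2 : ℍ[ℝ]) = ((2:ℝ) : ℍ[ℝ]) from by norm_cast]
      rw [coe_commutes, mul_assoc, mul_assoc, ← coe_mul, ← coe_mul]
      rw [inv_mul_cancel₀ (by positivity : (2 * y : ℝ) ≠ 0), coe_one, mul_one]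
    have hts : normSq x - normSq ((y : ℝ) : ℍ[ℝ]) = t := by
      rw [normSq_coe, hnx, hy2]; ring
    rw [hq, hts, hfveq]

/-- Finding the unit quaternion relating two columns with the same invariants. -/
lemma exists_rel {x yy x' y' : ℍ[ℝ]} (hq' : x * star yy = x' * star y')
    (hcP : normSq x + normSq yy = 1) (hny : normSq yy = normSq y') :
    ∃ a : ℍ[ℝ], x' = x * a ∧ y' = yy * a := by
  by_cases hy : yy = 0
  · have hy' : y' = 0 := by
      have : normSq y' = 0 := by rw [← hny, hy]; simp
      exact normSq_eq_zero.mp this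
    have hx0 : x ≠ 0 := by
      intro h0
      rw [h0, hy] at hcP
      simp at hcP
    have hx' : x' = x * (x⁻¹ * x') := by
      rw [← mul_assoc, mul_inv_cancel₀ hx0, one_mul]
    exact ⟨x⁻¹ * x', hx', by rw [hy, hy', zero_mul]⟩
  · have hy' : y' ≠ 0 := by
      intro h0
      rw [h0] at hny
      simp only [normSq.map_zero] at hny
      exact hy (normSq_eq_zero.mp hny)
    refine ⟨yy⁻¹ * y', ?_, by rw [← mul_assoc, mul_inv_cancel₀ hy, one_mul]⟩
    have hinv : yy⁻¹ = ((normSq yy)⁻¹ : ℝ) * star yy := by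
      rw [Quaternion.inv_def, ← coe_mul_eq_smul]
    have hyn : yy⁻¹ * ((normSq yy : ℝ) : ℍ[ℝ]) = star yy := by
      rw [hinv, mul_assoc, ← coe_commutes, ← mul_assoc, ← coe_mul,
        inv_mul_cancel₀ (normSq_ne_zero.mpr hy), coe_one, one_mul]
    have hsy' : star y' ≠ 0 := star_ne_zero.mpr hy'
    have goal' : x * (yy⁻¹ * y') * star y' = x' * star y' := by
      rw [mul_assoc, mul_assoc, self_mul_star, ← hny, hyn]
      exact hq'
    exact (mul_right_cancel₀ hsy' goal').symm

/-- Injectivity: equal images means same left coset. -/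
lemma fQ_inj (P Q : Sp2) (h : fQ P = fQ Q) : P⁻¹ * Q ∈ quatDiagTorus := by
  have hP1 : star P.val * P.val = 1 := (Unitary.mem_iff.mp P.2).1
  have hQ1 : star Q.val * Q.val = 1 := (Unitary.mem_iff.mp Q.2).1
  obtain ⟨hq, hte⟩ := fvec_inj h
  have hq' : P.val 0 0 * star (P.val 1 0) = Q.val 0 0 * star (Q.val 1 0) :=
    mul_left_cancel₀ (by
      have : ((2:ℝ) : ℍ[ℝ]) ≠ 0 := coe_injective.ne (by norm_num)
      simpa using this)
      (by rw [← mul_assoc, ← mul_assoc]; exact hq)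
  have hcP := col_sum hP1 0
  have hcQ := col_sum hQ1 0
  have hny : normSq (P.val 1 0) = normSq (Q.val 1 0) := by linarith
  obtain ⟨a, hA, hB⟩ := exists_rel hq' hcP hny
  apply mem_torus_of
  have hval : (P⁻¹ * Q).val = star P.val * Q.val := rfl
  rw [hval, Matrix.mul_apply, Fin.sum_univ_two]
  simp only [Matrix.star_apply]
  have horth : star (P.val 0 1) * P.val 0 0 + star (P.val 1 1) * P.val 1 0 = 0 := by
    have hh : (star P.val * P.val) 1 0 = (1 : M2) 1 0 := by rw [hP1]
    rw [Matrix.mul_apply, Fin.sum_univ_two] at hh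
    simpa [Matrix.star_apply, Matrix.one_apply] using hh
  rw [hA, hB, ← mul_assoc, ← mul_assoc, ← add_mul, horth, zero_mul]

/-- `Sp(2)` is a compact space. -/
lemma isCompact_sp2 : IsCompact (unitary M2 : Set M2) := by
  have hclosed : IsClosed (unitary M2 : Set M2) := by
    have heq : (unitary M2 : Set M2)
        = {Q : M2 | star Q * Q = 1} ∩ {Q : M2 | Q * star Q = 1} := by
      ext Q; exact Unitary.mem_iff
    rw [heq]
    have hc1 : Continuous fun Q : M2 => star Q * Q :=
      (continuous_id.matrix_conjTranspose).matrix_mul continuous_id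
    have hc2 : Continuous fun Q : M2 => Q * star Q :=
      continuous_id.matrix_mul (continuous_id.matrix_conjTranspose)
    exact (isClosed_eq hc1 continuous_const).inter (isClosed_eq hc2 continuous_const)
  have hK : IsCompact {Q : M2 | ∀ i j, ‖Q i j‖ ≤ 1} := by
    have heq2 : {Q : M2 | ∀ i j, ‖Q i j‖ ≤ 1}
        = Set.pi Set.univ (fun _ : Fin 2 =>
            Set.pi Set.univ fun _ : Fin 2 => Metric.closedBall (0 : ℍ[ℝ]) 1) := by
      ext Q
      constructor
      · intro h i _ j _
        simpa [Metric.mem_closedBall, dist_zero_right] using h i j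
      · intro h i j
        simpa [Metric.mem_closedBall, dist_zero_right] using
          h i (Set.mem_univ i) j (Set.mem_univ j)
    rw [heq2]
    exact isCompact_univ_pi fun _ => isCompact_univ_pi fun _ => isCompact_closedBall 0 1
  refine hK.of_isClosed_subset hclosed ?_
  intro Q hQ
  have h1 : star Q * Q = 1 := (Unitary.mem_iff.mp hQ).1
  intro i j
  have hc := col_sum h1 j
  have hle : normSq (Q i j) ≤ 1 := by
    fin_cases i
    · show normSq (Q 0 j) ≤ 1
      nlinarith [normSq_nonneg (a := Q 1 j)]
    · show normSq (Q 1 j) ≤ 1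
      nlinarith [normSq_nonneg (a := Q 0 j)]
  have h2 := normSq_eq_norm_mul_self (Q i j)
  nlinarith [norm_nonneg (Q i j)]

instance : CompactSpace Sp2 := isCompact_iff_compactSpace.mp isCompact_sp2

end Sp2Proof

open Sp2Proof

/-- **The coset space `Sp(2)/T` is homeomorphic to the 4-sphere `S⁴`.** -/
theorem sp2_quotient_torus_homeo_sphere :
    Nonempty ((Sp2 ⧸ quatDiagTorus) ≃ₜ Metric.sphere (0 : EuclideanSpace ℝ (Fin 5)) 1) := by
  set F : Sp2 → Metric.sphere (0 : EuclideanSpace ℝ (Fin 5)) 1 :=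
    fun Q => ⟨fQ Q, by simp [mem_sphere_zero_iff_norm, norm_fQ]⟩ with hF
  have hwd : ∀ P Q : Sp2, (QuotientGroup.leftRel quatDiagTorus).r P Q → F P = F Q := by
    intro P Q hPQ
    have hmem : P⁻¹ * Q ∈ quatDiagTorus := QuotientGroup.leftRel_apply.mp hPQ
    have hQis : Q = P * (P⁻¹ * Q) := by group
    refine Subtype.ext ?_
    show fQ P = fQ Q
    rw [hQis, fQ_mul_torus P _ hmem]
  set g : Sp2 ⧸ quatDiagTorus → Metric.sphere (0 : EuclideanSpace ℝ (Fin 5)) 1 :=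
    Quotient.lift F hwd with hg
  have hcont : Continuous g := Continuous.quotient_lift (cont_fQ.subtype_mk _) hwd
  have hbij : Function.Bijective g := by
    constructor
    · intro z w
      induction z using Quotient.inductionOn with | h P => ?_
      induction w using Quotient.inductionOn with | h Q => ?_
      intro hgz
      have hfq : fQ P = fQ Q := congrArg Subtype.val hgz
      exact Quotient.sound (QuotientGroup.leftRel_apply.mpr (fQ_inj P Q hfq))
    · intro v
      obtain ⟨Q, hQ⟩ := fQ_surj v.val (by
        have hv := v.prop
        rwa [mem_sphere_zero_iff_norm] at hv)
      exact ⟨⟦Q⟧, Subtype.ext hQ⟩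
  exact ⟨Continuous.homeoOfEquivCompactToT2 (f := Equiv.ofBijective g hbij) hcont⟩
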